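/- Let m be the minimum value of Γ(t+1) over t ≥ 0 (m ≈ 0.8856). For every real x ≥ 1, (1/x)·( e^x − 1 ) ≤ ν(x) ≤ x·( e^x + (1−m)/m ), where ν(x) = ∫_0^∞ x^t / Γ(t+1) dt (in particular this improper integral is finite). -/

import Mathlib

open MeasureTheory Set Filter Nat

/-!
Cut `(0, ∞)` into the unit intervals `[n, n + 1]`. There `x ^ n ≤ x ^ t ≤ x ^ (n + 1)` because
`x ≥ 1`, while `Γ(t + 1) ≤ (n + 1)!` by convexity of `Γ` and, for `n ≥ 1`, `n! ≤ Γ(t + 1)` by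
monotonicity of `Γ` on `[2, ∞)`; on `[0, 1]` only `m ≤ Γ(t + 1)` is available. So the `n`-th piece
of the integral lies between `x ^ n / (n + 1)!` and `x ^ (n + 1) / n!` (`x / m` for the first
piece), and summing against the exponential series gives `(e ^ x - 1) / x` from below and
`x / m + x (e ^ x - 1)` from above.
-/

theorem hasSum_intervalIntegral_of_nonneg {f : ℝ → ℝ} (hf : ∀ t, 0 ≤ t → 0 ≤ f t)
    (hfi : ∀ n : ℕ, IntervalIntegrable f volume n (n + 1))
    (hs : Summable fun n : ℕ => ∫ t in (n : ℝ)..n + 1, f t) :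
    IntegrableOn f (Ioi 0) ∧
      HasSum (fun n : ℕ => ∫ t in (n : ℝ)..n + 1, f t) (∫ t in Ioi 0, f t) := by
  have hfi' : ∀ k : ℕ, IntervalIntegrable f volume (k : ℝ) ((k + 1 : ℕ) : ℝ) := by
    simpa using hfi
  have piece_nonneg : ∀ n : ℕ, 0 ≤ ∫ t in (n : ℝ)..n + 1, f t := fun n =>
    intervalIntegral.integral_nonneg (by linarith) fun t ht => hf t (n.cast_nonneg.trans ht.1)
  have partial_sum : ∀ N : ℕ,
      ∑ n ∈ Finset.range N, ∫ t in (n : ℝ)..n + 1, f t = ∫ t in (0 : ℝ)..N, f t := fun N => by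
    simpa using intervalIntegral.sum_integral_adjacent_intervals fun k (_ : k < N) => hfi' k
  have integrableOn_Ioc : ∀ N : ℕ, IntegrableOn f (Ioc 0 N) := fun N =>
    (intervalIntegrable_iff_integrableOn_Ioc_of_le N.cast_nonneg).1 <| by
      simpa using IntervalIntegrable.trans_iterate fun k (_ : k < N) => hfi' k
  have norm_eq : ∀ N : ℕ, ∫ t in (0 : ℝ)..N, ‖f t‖ = ∫ t in (0 : ℝ)..N, f t := fun N =>
    intervalIntegral.integral_congr fun t ht =>
      Real.norm_of_nonneg (hf t (by rw [uIcc_of_le N.cast_nonneg] at ht; exact ht.1))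
  have hI : IntegrableOn f (Ioi 0) := by
    refine integrableOn_Ioi_of_intervalIntegral_norm_bounded (∑' n : ℕ, ∫ t in (n : ℝ)..n + 1, f t)
      0 integrableOn_Ioc tendsto_natCast_atTop_atTop (Eventually.of_forall fun N => ?_)
    rw [norm_eq, ← partial_sum]
    exact hs.sum_le_tsum _ fun n _ => piece_nonneg n
  refine ⟨hI, (hasSum_iff_tendsto_nat_of_nonneg piece_nonneg _).2 ?_⟩
  simpa only [partial_sum] using
    intervalIntegral_tendsto_integral_Ioi 0 hI tendsto_natCast_atTop_atTop

theorem le_intervalIntegral_add_one_of_forall_le {f : ℝ → ℝ} {a c : ℝ}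
    (hf : IntervalIntegrable f volume a (a + 1)) (h : ∀ t ∈ Icc a (a + 1), c ≤ f t) :
    c ≤ ∫ t in a..a + 1, f t := by
  simpa using intervalIntegral.integral_mono_on (by linarith) intervalIntegrable_const hf h

theorem intervalIntegral_add_one_le_of_forall_le {f : ℝ → ℝ} {a c : ℝ}
    (hf : IntervalIntegrable f volume a (a + 1)) (h : ∀ t ∈ Icc a (a + 1), f t ≤ c) :
    ∫ t in a..a + 1, f t ≤ c := by
  simpa using intervalIntegral.integral_mono_on (by linarith) hf intervalIntegrable_const h

namespace Real

theorem hasSum_pow_succ_div_factorial_succ (x : ℝ) :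
    HasSum (fun n : ℕ => x ^ (n + 1) / (n + 1)!) (exp x - 1) := by
  have h := NormedSpace.expSeries_div_hasSum_exp x
  rw [← exp_eq_exp_ℝ] at h
  simpa using (hasSum_nat_add_iff' 1).2 h

theorem hasSum_pow_div_factorial_succ {x : ℝ} (hx : x ≠ 0) :
    HasSum (fun n : ℕ => x ^ n / (n + 1)!) (1 / x * (exp x - 1)) := by
  refine ((hasSum_pow_succ_div_factorial_succ x).mul_left (1 / x)).congr_fun fun n => ?_
  field_simp
  ring

theorem hasSum_pow_add_two_div_factorial_succ (x : ℝ) :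
    HasSum (fun n : ℕ => x ^ (n + 2) / (n + 1)!) (x * (exp x - 1)) := by
  refine ((hasSum_pow_succ_div_factorial_succ x).mul_left x).congr_fun fun n => ?_
  ring

theorem Gamma_add_one_le_factorial_succ {n : ℕ} {t : ℝ} (ht : t ∈ Icc (n : ℝ) (n + 1)) :
    Gamma (t + 1) ≤ (n + 1)! := by
  have hseg : t + 1 ∈ segment ℝ ((n : ℝ) + 1) ((n + 1 : ℕ) + 1) := by
    rw [segment_eq_Icc (by push_cast; linarith)]
    push_cast
    exact ⟨by linarith [ht.1], by linarith [ht.2]⟩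
  have h := convexOn_Gamma.le_on_segment (by simp; positivity) (by simp; positivity) hseg
  rw [Gamma_nat_eq_factorial, Gamma_nat_eq_factorial] at h
  exact h.trans (max_le (mod_cast factorial_le n.le_succ) le_rfl)

theorem factorial_le_Gamma_add_one {n : ℕ} (hn : 1 ≤ n) {t : ℝ} (ht : (n : ℝ) ≤ t) :
    (n ! : ℝ) ≤ Gamma (t + 1) := by
  have h2 : (2 : ℝ) ≤ n + 1 := by
    have : (1 : ℝ) ≤ n := mod_cast hn
    linarith
  rw [← Gamma_nat_eq_factorial]
  exact Gamma_strictMonoOn_Ici.monotoneOn h2 (h2.trans (by linarith)) (by linarith)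

theorem continuousOn_rpow_div_Gamma_add_one {x : ℝ} (hx : 0 < x) :
    ContinuousOn (fun t : ℝ => x ^ t / Gamma (t + 1)) (Ici 0) := by
  refine (continuous_const_rpow hx.ne').continuousOn.div ?_ fun t ht =>
    (Gamma_pos_of_pos (by simp at ht; linarith)).ne'
  exact differentiableOn_Gamma_Ioi.continuousOn.comp (continuous_add_const 1).continuousOn
    fun t ht => by simp at ht ⊢; linarith

section

variable {x t : ℝ} {n : ℕ}

theorem pow_div_factorial_succ_le_rpow_div_Gamma (hx : 1 ≤ x) (ht : t ∈ Icc (n : ℝ) (n + 1)) :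
    x ^ n / (n + 1)! ≤ x ^ t / Gamma (t + 1) := by
  have ht0 : 0 ≤ t := n.cast_nonneg.trans ht.1
  refine div_le_div₀ (by positivity) ?_ (Gamma_pos_of_pos (by linarith))
    (Gamma_add_one_le_factorial_succ ht)
  rw [← rpow_natCast]
  exact rpow_le_rpow_of_exponent_le hx ht.1

theorem rpow_div_Gamma_le_pow_div_factorial (hx : 1 ≤ x) (hn : 1 ≤ n)
    (ht : t ∈ Icc (n : ℝ) (n + 1)) :
    x ^ t / Gamma (t + 1) ≤ x ^ (n + 1) / n ! := by
  refine div_le_div₀ (by positivity) ?_ (by positivity) (factorial_le_Gamma_add_one hn ht.1)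
  rw [← rpow_natCast]
  exact rpow_le_rpow_of_exponent_le hx (by push_cast; exact ht.2)

theorem rpow_div_Gamma_le_div {m : ℝ} (hx : 1 ≤ x) (hm : 0 < m) (hmt : m ≤ Gamma (t + 1))
    (ht : t ≤ 1) : x ^ t / Gamma (t + 1) ≤ x / m := by
  refine div_le_div₀ (by positivity) ?_ hm hmt
  simpa using rpow_le_rpow_of_exponent_le hx ht

end

end Real

theorem nu_bounds (m : ℝ)
    (hm : IsLeast ((fun t : ℝ => Real.Gamma (t + 1)) '' Set.Ici (0 : ℝ)) m)
    (x : ℝ) (hx : 1 ≤ x) :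
    IntegrableOn (fun t : ℝ => x ^ t / Real.Gamma (t + 1)) (Set.Ioi 0) ∧
    (1 / x) * (Real.exp x - 1) ≤ ∫ t in Set.Ioi (0 : ℝ), x ^ t / Real.Gamma (t + 1) ∧
    (∫ t in Set.Ioi (0 : ℝ), x ^ t / Real.Gamma (t + 1)) ≤
      x * (Real.exp x + (1 - m) / m) := by
  set f := fun t : ℝ => x ^ t / Real.Gamma (t + 1)
  have hm0 : 0 < m := by
    obtain ⟨t, ht, rfl⟩ := hm.1
    exact Real.Gamma_pos_of_pos (by simp at ht; linarith)
  have hf : ∀ t, 0 ≤ t → 0 ≤ f t := fun t ht =>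
    div_nonneg (by positivity) (Real.Gamma_pos_of_pos (by linarith)).le
  have hfi : ∀ n : ℕ, IntervalIntegrable f volume n (n + 1) := fun n =>
    ((Real.continuousOn_rpow_div_Gamma_add_one (by linarith)).mono fun t ht =>
      n.cast_nonneg.trans ht.1).intervalIntegrable_of_Icc (by linarith)
  have lower : ∀ n : ℕ, x ^ n / (n + 1)! ≤ ∫ t in (n : ℝ)..n + 1, f t := fun n =>
    le_intervalIntegral_add_one_of_forall_le (hfi n) fun t ht =>
      Real.pow_div_factorial_succ_le_rpow_div_Gamma hx ht
  have upper : ∀ n : ℕ, ∫ t in ((n + 1 : ℕ) : ℝ)..(n + 1 : ℕ) + 1, f t ≤ x ^ (n + 2) / (n + 1)! :=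
    fun n => intervalIntegral_add_one_le_of_forall_le (hfi _) fun t ht =>
      Real.rpow_div_Gamma_le_pow_div_factorial hx (by omega) ht
  have first : ∫ t in (0 : ℝ)..1, f t ≤ x / m := by
    simpa using intervalIntegral_add_one_le_of_forall_le (a := 0) (by simpa using hfi 0) fun t ht =>
      Real.rpow_div_Gamma_le_div hx hm0 (hm.2 ⟨t, by simpa using ht.1, rfl⟩) (by simpa using ht.2)
  have hs : Summable fun n : ℕ => ∫ t in (n : ℝ)..n + 1, f t := by
    refine (summable_nat_add_iff 1).1 <|
      (Real.hasSum_pow_add_two_div_factorial_succ x).summable.of_nonneg_of_le (fun n => ?_) upper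
    exact intervalIntegral.integral_nonneg (by linarith) fun t ht =>
      hf t (le_trans (by positivity) ht.1)
  obtain ⟨hI, hsum⟩ := hasSum_intervalIntegral_of_nonneg hf hfi hs
  refine ⟨hI, hasSum_le lower (Real.hasSum_pow_div_factorial_succ (by linarith)) hsum, ?_⟩
  have tail := hasSum_le upper ((hasSum_nat_add_iff' 1).2 hsum)
    (Real.hasSum_pow_add_two_div_factorial_succ x)
  simp only [Finset.range_one, Finset.sum_singleton, Nat.cast_zero, zero_add] at tail
  calc ∫ t in Ioi 0, f t ≤ x / m + x * (Real.exp x - 1) := by linarith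
    _ = x * (Real.exp x + (1 - m) / m) := by field_simp; ring
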